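/- Let f : [0,1] → [0,1] be nondecreasing, and suppose f arises as f(φ(t)) = ψ(t) where φ, ψ : [0,1] → [0,1] are differentiable with derivatives bounded in absolute value by u_F and u_T respectively. For k ≥ 1, let L be the piecewise linear interpolant of f at the points φ(i/k), i = 0, 1, …, k. Then the area between f and L, i.e. ∫₀¹ |f(x) - L(x)| dx, is at most u_T·u_F / (2k). -/

import Mathlib

open Set MeasureTheory

/-- Core lemma: a monotone function `g` mapping `[0,1]` into `[0,1]` stays within
total area `1/2` of the diagonal. -/
lemma pla_core_half (g : ℝ → ℝ) (hg : Monotone g)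
    (hr : ∀ x ∈ Icc (0:ℝ) 1, g x ∈ Icc (0:ℝ) 1) :
    ∫ x in (0:ℝ)..1, |g x - x| ≤ 1 / 2 := by
  classical
  set lo : ℝ → ℝ := fun x => min (g x) x with hlo
  set hi : ℝ → ℝ := fun x => max (g x) x with hhi
  have hgm : Measurable g := hg.measurable
  have hlom : Measurable lo := hgm.min measurable_id
  have hhim : Measurable hi := hgm.max measurable_id
  have hgint : IntegrableOn g (Ioc (0:ℝ) 1) :=
    ((hg.monotoneOn _).integrableOn_isCompact (isCompact_Icc (a := (0:ℝ)) (b := 1))).mono_set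
      Ioc_subset_Icc_self
  have hidint : IntegrableOn (fun x : ℝ => x) (Ioc (0:ℝ) 1) :=
    continuous_id.integrableOn_Ioc
  have hloint : IntegrableOn lo (Ioc (0:ℝ) 1) := by
    have h := hgint.inf hidint
    exact h
  have hhiint : IntegrableOn hi (Ioc (0:ℝ) 1) := by
    have h := hgint.sup hidint
    exact h
  set A : Set (ℝ × ℝ) := regionBetween lo hi (Ioc 0 1) with hA
  have hAmeas : MeasurableSet A :=
    measurableSet_regionBetween hlom hhim measurableSet_Ioc
  have hvol : (volume : Measure ℝ).prod volume A
      = ENNReal.ofReal (∫ y in Ioc (0:ℝ) 1, (hi - lo) y) :=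
    volume_regionBetween_eq_integral hloint hhiint measurableSet_Ioc
      (fun x _ => min_le_max)
  -- A is inside the unit square
  have hsq : A ⊆ Icc (0:ℝ) 1 ×ˢ Icc (0:ℝ) 1 := by
    rintro ⟨x, y⟩ ⟨hx, hy1, hy2⟩
    have hx' : x ∈ Icc (0:ℝ) 1 := Ioc_subset_Icc_self hx
    have hgx := hr x hx'
    refine ⟨hx', ?_, ?_⟩
    · have h0 : (0:ℝ) ≤ lo x := le_min hgx.1 hx'.1
      exact le_of_lt (lt_of_le_of_lt h0 hy1)
    · have h1 : hi x ≤ 1 := max_le hgx.2 hx'.2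
      exact le_of_lt (lt_of_lt_of_le hy2 h1)
  have hsq' : Prod.swap ⁻¹' A ⊆ Icc (0:ℝ) 1 ×ˢ Icc (0:ℝ) 1 := by
    rintro ⟨x, y⟩ hp
    have h := hsq hp
    exact ⟨h.2, h.1⟩
  -- A and its reflection across the diagonal are disjoint
  have hdisj : Disjoint A (Prod.swap ⁻¹' A) := by
    rw [Set.disjoint_left]
    rintro ⟨x, y⟩ ⟨hx, hy1, hy2⟩ hmem
    obtain ⟨hx', hy1', hy2'⟩ : y ∈ Ioc (0:ℝ) 1 ∧ lo y < x ∧ x < hi y := hmem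
    simp only [hlo, hhi, min_lt_iff, lt_max_iff] at hy1 hy2 hy1' hy2'
    rcases le_total x y with hxy | hxy
    · have hm := hg hxy
      rcases hy2 with h1 | h1 <;> rcases hy1' with h2 | h2 <;> linarith
    · have hm := hg hxy
      rcases hy1 with h1 | h1 <;> rcases hy2' with h2 | h2 <;> linarith
  -- reflection preserves volume
  have hswapmeas : MeasurableSet (Prod.swap ⁻¹' A) :=
    hAmeas.preimage measurable_swap
  have hswapvol : (volume : Measure ℝ).prod volume (Prod.swap ⁻¹' A)
      = (volume : Measure ℝ).prod volume A :=
    Measure.measurePreserving_swap.measure_preimage hAmeas.nullMeasurableSet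
  have hunion : (volume : Measure ℝ).prod volume A
        + (volume : Measure ℝ).prod volume (Prod.swap ⁻¹' A)
      ≤ 1 := by
    rw [← measure_union hdisj hswapmeas]
    calc (volume : Measure ℝ).prod volume (A ∪ Prod.swap ⁻¹' A)
        ≤ (volume : Measure ℝ).prod volume (Icc (0:ℝ) 1 ×ˢ Icc (0:ℝ) 1) :=
          measure_mono (Set.union_subset hsq hsq')
      _ = 1 := by rw [Measure.prod_prod, Real.volume_Icc]; norm_num
  have hInonneg : 0 ≤ ∫ y in Ioc (0:ℝ) 1, (hi - lo) y := by
    apply setIntegral_nonneg measurableSet_Ioc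
    intro x _
    simp only [Pi.sub_apply]
    exact sub_nonneg.2 min_le_max
  have hIle : (∫ y in Ioc (0:ℝ) 1, (hi - lo) y) ≤ 1 / 2 := by
    rw [hswapvol, hvol] at hunion
    have h2 : ENNReal.ofReal ((∫ y in Ioc (0:ℝ) 1, (hi - lo) y)
        + (∫ y in Ioc (0:ℝ) 1, (hi - lo) y)) ≤ ENNReal.ofReal 1 := by
      rw [ENNReal.ofReal_add hInonneg hInonneg, ENNReal.ofReal_one]
      exact hunion
    have h3 := (ENNReal.ofReal_le_ofReal_iff (by norm_num)).1 h2
    linarith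
  calc ∫ x in (0:ℝ)..1, |g x - x|
      = ∫ y in Ioc (0:ℝ) 1, (hi - lo) y := by
        rw [intervalIntegral.integral_of_le (by norm_num : (0:ℝ) ≤ 1)]
        apply setIntegral_congr_fun measurableSet_Ioc
        intro x _
        simp only [Pi.sub_apply, hhi, hlo]
        rw [max_sub_min_eq_abs]
        try rw [abs_sub_comm]
    _ ≤ 1 / 2 := hIle

/-- Chord lemma: the area between a monotone function and its chord on `[a,b]`
is at most half the bounding rectangle. -/
lemma pla_chord_bound (g : ℝ → ℝ) {a b : ℝ} (hab : a ≤ b)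
    (hg : MonotoneOn g (Icc a b)) (p q : ℝ)
    (hpa : p * a + q = g a) (hpb : p * b + q = g b) :
    ∫ x in a..b, |g x - (p * x + q)| ≤ (b - a) * (g b - g a) / 2 := by
  rcases eq_or_lt_of_le hab with rfl | hab'
  · simp
  have hba : (0:ℝ) < b - a := sub_pos.2 hab'
  have hbane : b - a ≠ 0 := ne_of_gt hba
  have hma : a ∈ Icc a b := ⟨le_refl a, hab⟩
  have hmb : b ∈ Icc a b := ⟨hab, le_refl b⟩
  set m := g a with hm
  set M := g b with hM
  have hmM : m ≤ M := hg hma hmb hab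
  rcases eq_or_lt_of_le hmM with heq | hlt
  · -- constant case
    have hp0 : p = 0 := by
      have h1 : p * a + q = p * b + q := by rw [hpa, hpb]; exact heq
      have h2 : p * (b - a) = 0 := by linear_combination -h1
      rcases mul_eq_zero.1 h2 with h | h
      · exact h
      · exact absurd h hbane
    have hq0 : q = m := by rw [← hpa, hp0]; ring
    have hcongr : EqOn (fun x => |g x - (p * x + q)|) (fun _ => (0:ℝ)) (Set.uIcc a b) := by
      intro x hx
      rw [Set.uIcc_of_le hab] at hx
      have h1 : g x ≤ M := hg hx hmb hx.2
      have h2 : m ≤ g x := hg hma hx hx.1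
      have hgx : g x = m := le_antisymm (heq ▸ h1) h2
      simp [hp0, hq0, hgx]
    rw [intervalIntegral.integral_congr hcongr]
    simp only [intervalIntegral.integral_const, smul_zero]
    have h0 : (0:ℝ) ≤ (b - a) * (M - m) / 2 := by
      apply div_nonneg _ (by norm_num)
      exact mul_nonneg (le_of_lt hba) (sub_nonneg.2 hmM)
    simpa using h0
  · -- nondegenerate case
    have hMm : (0:ℝ) < M - m := sub_pos.2 hlt
    have hpval : p = (M - m) / (b - a) := by
      have h2 : p * (b - a) = M - m := by linear_combination hpb - hpa
      field_simp
      linarith [h2]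
    set G : ℝ → ℝ := fun u => (g (a + (b - a) * max 0 (min u 1)) - m) / (M - m) with hG
    have hclamp : ∀ u : ℝ, a + (b - a) * max 0 (min u 1) ∈ Icc a b := by
      intro u
      have h0 : (0:ℝ) ≤ max 0 (min u 1) := le_max_left _ _
      have h1 : max 0 (min u 1) ≤ 1 := max_le (by norm_num) (min_le_right _ _)
      constructor
      · nlinarith
      · nlinarith
    have hGmono : Monotone G := by
      intro u v huv
      have hcl : max 0 (min u 1) ≤ max 0 (min v 1) :=
        max_le_max (le_refl 0) (min_le_min huv (le_refl 1))
      have harg : a + (b - a) * max 0 (min u 1) ≤ a + (b - a) * max 0 (min v 1) := by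
        nlinarith
      have hgle := hg (hclamp u) (hclamp v) harg
      exact (div_le_div_iff_of_pos_right hMm).2 (by linarith)
    have hGr : ∀ u ∈ Icc (0:ℝ) 1, G u ∈ Icc (0:ℝ) 1 := by
      intro u _
      have hx := hclamp u
      have h1 : m ≤ g (a + (b - a) * max 0 (min u 1)) := hg hma hx hx.1
      have h2 : g (a + (b - a) * max 0 (min u 1)) ≤ M := hg hx hmb hx.2
      constructor
      · apply div_nonneg (by linarith) (le_of_lt hMm)
      · rw [div_le_one hMm]; linarith
    have hcore := pla_core_half G hGmono hGr
    set F : ℝ → ℝ := fun x => |g x - (p * x + q)| with hF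
    have hconv : ∫ u in (0:ℝ)..1, F ((b - a) * u + a)
        = (b - a)⁻¹ • ∫ x in ((b - a) * 0 + a)..((b - a) * 1 + a), F x :=
      intervalIntegral.integral_comp_mul_add F hbane a
    have hends0 : (b - a) * 0 + a = a := by ring
    have hends1 : (b - a) * 1 + a = b := by ring
    rw [hends0, hends1] at hconv
    have hmain : ∫ x in a..b, F x = (b - a) * ∫ u in (0:ℝ)..1, F ((b - a) * u + a) := by
      rw [hconv, smul_eq_mul, ← mul_assoc, mul_inv_cancel₀ hbane, one_mul]
    have hcongr2 : EqOn (fun u => F ((b - a) * u + a))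
        (fun u => (M - m) * |G u - u|) (Set.uIcc (0:ℝ) 1) := by
      intro u hu
      rw [Set.uIcc_of_le (by norm_num : (0:ℝ) ≤ 1)] at hu
      have hminu : min u 1 = u := min_eq_left hu.2
      have hmaxu : max 0 (min u 1) = u := by rw [hminu]; exact max_eq_right hu.1
      have hxeq : a + (b - a) * max 0 (min u 1) = (b - a) * u + a := by rw [hmaxu]; ring
      have hq' : q = m - p * a := by linarith [hpa]
      have hline : p * (a + (b - a) * max 0 (min u 1)) + q = m + (M - m) * u := by
        rw [hq', hpval, hmaxu]
        field_simp
        ring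
      simp only [hF, hG]
      rw [← hxeq, hline]
      have hfact : g (a + (b - a) * max 0 (min u 1)) - (m + (M - m) * u)
          = (M - m) * ((g (a + (b - a) * max 0 (min u 1)) - m) / (M - m) - u) := by
        field_simp
        ring
      rw [hfact, abs_mul, abs_of_pos hMm]
    have hstep : ∫ u in (0:ℝ)..1, F ((b - a) * u + a)
        = (M - m) * ∫ u in (0:ℝ)..1, |G u - u| := by
      rw [intervalIntegral.integral_congr hcongr2, intervalIntegral.integral_const_mul]
    calc ∫ x in a..b, F x
        = (b - a) * ((M - m) * ∫ u in (0:ℝ)..1, |G u - u|) := by rw [hmain, hstep]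
      _ ≤ (b - a) * ((M - m) * (1 / 2)) := by
          apply mul_le_mul_of_nonneg_left _ (le_of_lt hba)
          exact mul_le_mul_of_nonneg_left hcore (le_of_lt hMm)
      _ = (b - a) * (M - m) / 2 := by ring

/-- PLA loss bound: the area between the ROC curve `f` and its piecewise linear
interpolant `L` at `k` equally spaced threshold queries is at most
`u_T * u_F / (2k)`. -/
theorem pla_loss_bound (f φ ψ : ℝ → ℝ) (u_T u_F : ℝ) (k : ℕ) (hk : 1 ≤ k)
    (hf_mono : MonotoneOn f (Icc 0 1))
    (hf_range : ∀ x ∈ Icc (0:ℝ) 1, f x ∈ Icc (0:ℝ) 1)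
    (hφ_range : ∀ t ∈ Icc (0:ℝ) 1, φ t ∈ Icc (0:ℝ) 1)
    (hψ_range : ∀ t ∈ Icc (0:ℝ) 1, ψ t ∈ Icc (0:ℝ) 1)
    (hφ_mono : MonotoneOn φ (Icc 0 1)) (hψ_mono : MonotoneOn ψ (Icc 0 1))
    (hφ0 : φ 0 = 0) (hφ1 : φ 1 = 1)
    (hφ : Differentiable ℝ φ) (hψ : Differentiable ℝ ψ)
    (hφ' : ∀ t, |deriv φ t| ≤ u_F) (hψ' : ∀ t, |deriv ψ t| ≤ u_T)
    (hcomp : ∀ t ∈ Icc (0:ℝ) 1, f (φ t) = ψ t)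
    (L : ℝ → ℝ)
    (hL_nodes : ∀ i : Fin (k + 1), L (φ ((i : ℕ) / k)) = f (φ ((i : ℕ) / k)))
    (hL_affine : ∀ i : Fin k, ∃ a b : ℝ,
      ∀ x ∈ Icc (φ ((i : ℕ) / k)) (φ (((i : ℕ) + 1) / k)), L x = a * x + b) :
    ∫ x in (0:ℝ)..1, |f x - L x| ≤ u_T * u_F / (2 * k) := by
  have hk0 : (0:ℝ) < k := by exact_mod_cast Nat.lt_of_lt_of_le Nat.zero_lt_one hk
  have huF : 0 ≤ u_F := le_trans (abs_nonneg _) (hφ' 0)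
  have huT : 0 ≤ u_T := le_trans (abs_nonneg _) (hψ' 0)
  set x : ℕ → ℝ := fun i => φ (i / k) with hxdef
  have htmem : ∀ i : ℕ, i ≤ k → ((i : ℝ) / k) ∈ Icc (0:ℝ) 1 := by
    intro i hi
    constructor
    · positivity
    · rw [div_le_one hk0]; exact_mod_cast hi
  have hxmem : ∀ i : ℕ, i ≤ k → x i ∈ Icc (0:ℝ) 1 := fun i hi => hφ_range _ (htmem i hi)
  have hxmono : ∀ i j : ℕ, i ≤ j → j ≤ k → x i ≤ x j := by
    intro i j hij hj
    apply hφ_mono (htmem i (le_trans hij hj)) (htmem j hj)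
    have hij' : (i : ℝ) ≤ j := by exact_mod_cast hij
    exact (div_le_div_iff_of_pos_right hk0).2 hij'
  have hx0 : x 0 = 0 := by simp [hxdef, hφ0]
  have hxk : x k = 1 := by
    simp only [hxdef]
    rw [div_self (ne_of_gt hk0), hφ1]
  -- MVT bound on widths
  have hwidth : ∀ i : ℕ, i < k → x (i + 1) - x i ≤ u_F / k := by
    intro i hi
    have hlt : (i : ℝ) / k < ((i + 1 : ℕ) : ℝ) / k := by
      rw [div_lt_div_iff₀ hk0 hk0]
      push_cast
      nlinarith
    obtain ⟨c, _, hc⟩ := exists_hasDerivAt_eq_slope φ (deriv φ) hlt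
      hφ.continuous.continuousOn (fun t _ => (hφ t).hasDerivAt)
    have hden : ((i + 1 : ℕ) : ℝ) / k - (i : ℝ) / k = 1 / k := by push_cast; ring
    have h1k : (1:ℝ) / k ≠ 0 := by positivity
    have heq : x (i + 1) - x i = deriv φ c * (1 / k) := by
      rw [hc, hden, div_mul_cancel₀ _ h1k]
    rw [heq]
    have hd : deriv φ c ≤ u_F := le_trans (le_abs_self _) (hφ' c)
    calc deriv φ c * (1 / k) ≤ u_F * (1 / k) :=
          mul_le_mul_of_nonneg_right hd (by positivity)
      _ = u_F / k := by ring
  -- per-piece: integrability and the chord bound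
  have hkey : ∀ i : ℕ, i < k →
      IntervalIntegrable (fun t => |f t - L t|) volume (x i) (x (i + 1)) ∧
      (∫ t in x i..x (i + 1), |f t - L t|) ≤ u_F / k * (f (x (i + 1)) - f (x i)) / 2 := by
    intro i hi
    obtain ⟨p, q, hpq⟩ := hL_affine ⟨i, hi⟩
    have hcast : ((i : ℝ) + 1) = ((i + 1 : ℕ) : ℝ) := by push_cast; ring
    have hpq' : ∀ t ∈ Icc (x i) (x (i + 1)), L t = p * t + q := by
      intro t ht
      simp only [hxdef] at ht
      rw [← hcast] at ht
      exact hpq t ht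
    have hni : L (x i) = f (x i) := by
      have h := hL_nodes ⟨i, by omega⟩
      simpa [hxdef, Fin.val_mk] using h
    have hni1 : L (x (i + 1)) = f (x (i + 1)) := by
      have h := hL_nodes ⟨i + 1, by omega⟩
      simpa [hxdef, Fin.val_mk] using h
    have hab : x i ≤ x (i + 1) := hxmono i (i + 1) (by omega) (by omega)
    have hsub : Icc (x i) (x (i + 1)) ⊆ Icc (0:ℝ) 1 :=
      Icc_subset_Icc (hxmem i (by omega)).1 (hxmem (i + 1) (by omega)).2
    have hmono' : MonotoneOn f (Icc (x i) (x (i + 1))) := hf_mono.mono hsub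
    have hpa : p * (x i) + q = f (x i) := by
      rw [← hpq' (x i) ⟨le_refl _, hab⟩, hni]
    have hpb : p * (x (i + 1)) + q = f (x (i + 1)) := by
      rw [← hpq' (x (i + 1)) ⟨hab, le_refl _⟩, hni1]
    -- integrability
    have hfii : IntervalIntegrable f volume (x i) (x (i + 1)) := by
      apply MonotoneOn.intervalIntegrable
      rwa [Set.uIcc_of_le hab]
    have hlii : IntervalIntegrable (fun t => p * t + q) volume (x i) (x (i + 1)) :=
      ((continuous_const.mul continuous_id).add continuous_const).intervalIntegrable _ _
    have habs : IntervalIntegrable (fun t => |f t - (p * t + q)|) volume (x i) (x (i + 1)) :=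
      (hfii.sub hlii).abs
    have hii : IntervalIntegrable (fun t => |f t - L t|) volume (x i) (x (i + 1)) := by
      rw [intervalIntegrable_iff_integrableOn_Ioc_of_le hab] at habs ⊢
      apply habs.congr_fun _ measurableSet_Ioc
      intro t ht
      show |f t - (p * t + q)| = |f t - L t|
      rw [hpq' t (Ioc_subset_Icc_self ht)]
    refine ⟨hii, ?_⟩
    have hcg : (∫ t in x i..x (i + 1), |f t - L t|)
        = ∫ t in x i..x (i + 1), |f t - (p * t + q)| := by
      apply intervalIntegral.integral_congr
      intro t ht
      rw [Set.uIcc_of_le hab] at ht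
      show |f t - L t| = |f t - (p * t + q)|
      rw [hpq' t ht]
    rw [hcg]
    have hchord := pla_chord_bound f hab hmono' p q hpa hpb
    have hΔy : 0 ≤ f (x (i + 1)) - f (x i) :=
      sub_nonneg.2 (hmono' ⟨le_refl _, hab⟩ ⟨hab, le_refl _⟩ hab)
    have hw := hwidth i hi
    refine le_trans hchord ?_
    nlinarith
  -- sum the pieces
  have hsplit := intervalIntegral.sum_integral_adjacent_intervals
    (f := fun t => |f t - L t|) (μ := volume) (a := x) (n := k)
    (fun i hi => (hkey i hi).1)
  have hgoal : (∫ t in (0:ℝ)..1, |f t - L t|)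
      = ∑ i ∈ Finset.range k, ∫ t in x i..x (i + 1), |f t - L t| := by
    rw [hsplit, hx0, hxk]
  rw [hgoal]
  have hψd : ψ 1 - ψ 0 ≤ u_T := by
    obtain ⟨c, _, hc⟩ := exists_hasDerivAt_eq_slope ψ (deriv ψ) one_pos
      hψ.continuous.continuousOn (fun t _ => (hψ t).hasDerivAt)
    have h : ψ 1 - ψ 0 = deriv ψ c := by rw [hc]; norm_num
    rw [h]
    exact le_trans (le_abs_self _) (hψ' c)
  have hψ0 : 0 ≤ ψ 1 - ψ 0 := by
    have h1 : f 1 = ψ 1 := by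
      have h := hcomp 1 ⟨zero_le_one, le_refl 1⟩; rwa [hφ1] at h
    have h0 : f 0 = ψ 0 := by
      have h := hcomp 0 ⟨le_refl 0, zero_le_one⟩; rwa [hφ0] at h
    rw [← h1, ← h0]
    exact sub_nonneg.2 (hf_mono ⟨le_refl 0, zero_le_one⟩ ⟨zero_le_one, le_refl 1⟩ zero_le_one)
  calc ∑ i ∈ Finset.range k, ∫ t in x i..x (i + 1), |f t - L t|
      ≤ ∑ i ∈ Finset.range k, u_F / k * (f (x (i + 1)) - f (x i)) / 2 :=
        Finset.sum_le_sum (fun i hi => (hkey i (Finset.mem_range.1 hi)).2)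
    _ = u_F / k / 2 * ∑ i ∈ Finset.range k, (f (x (i + 1)) - f (x i)) := by
        rw [Finset.mul_sum]
        exact Finset.sum_congr rfl (fun i _ => by ring)
    _ = u_F / k / 2 * (f (x k) - f (x 0)) := by
        rw [Finset.sum_range_sub (fun i => f (x i))]
    _ = u_F / k / 2 * (ψ 1 - ψ 0) := by
        rw [hx0, hxk]
        have h1 : f 1 = ψ 1 := by
          have h := hcomp 1 ⟨zero_le_one, le_refl 1⟩; rwa [hφ1] at h
        have h0 : f 0 = ψ 0 := by
          have h := hcomp 0 ⟨le_refl 0, zero_le_one⟩; rwa [hφ0] at h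
        rw [h1, h0]
    _ ≤ u_F / k / 2 * u_T := by
        have hc : 0 ≤ u_F / k / 2 := by positivity
        nlinarith
    _ = u_T * u_F / (2 * k) := by field_simp
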